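/- Energy identity for the full discretization dG(q)–cG(r). Let q ≥ 0 be an integer, l ∈ ℝ, and let U = (U₁,U₂) ∈ 𝒱_{h,q} satisfy B(U,V) = L̂(V) for all V ∈ 𝒱_{h,q}. Then ‖U_{1,N}^−‖_{h,l+1}² + ‖U_{2,N}^−‖_{h,l}² + Σ_{n=0}^{N−1} ( ‖[U₁]_n‖_{h,l+1}² + ‖[U₂]_n‖_{h,l}² ) = ‖u_{h,0}‖_{h,l+1}² + ‖v_{h,0}‖_{h,l}² + 2 ∫₀^T ( a(P_k R_h f₁(t), A_h^l U₁(t)) + (P_k P_h f₂(t), A_h^l U₂(t)) ) dt. -/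

import Mathlib

noncomputable section

open scoped RealInnerProductSpace BigOperators
open MeasureTheory

/-- Squared fractional-order norm `‖v‖_α² = Σ_k λ_k^α (v,φ_k)²`. -/
def hsNormSq {H : Type*} [NormedAddCommGroup H] [InnerProductSpace ℝ H]
    (φ : ℕ → H) (lam : ℕ → ℝ) (α : ℝ) (v : H) : ℝ :=
  ∑' k, lam k ^ α * ⟪v, φ k⟫ ^ 2

/-- Fractional-order norm `‖v‖_α`. -/
def hsNorm {H : Type*} [NormedAddCommGroup H] [InnerProductSpace ℝ H]
    (φ : ℕ → H) (lam : ℕ → ℝ) (α : ℝ) (v : H) : ℝ :=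
  Real.sqrt (hsNormSq φ lam α v)

/-- Membership in the fractional-order space `Ḣ^α`. -/
def MemHs {H : Type*} [NormedAddCommGroup H] [InnerProductSpace ℝ H]
    (φ : ℕ → H) (lam : ℕ → ℝ) (α : ℝ) (v : H) : Prop :=
  Summable (fun k => lam k ^ α * ⟪v, φ k⟫ ^ 2)

/-- Weighted spectral pairing `Σ_k λ_k^l (u,φ_k)(v,φ_k)`.
`aPow φ lam 1 u v = a(u,v)`, `aPow φ lam (l+1) u v = a(u, A^l v)` and
`aPow φ lam l u v = (u, A^l v)`. -/
def aPow {H : Type*} [NormedAddCommGroup H] [InnerProductSpace ℝ H]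
    (φ : ℕ → H) (lam : ℕ → ℝ) (l : ℝ) (u v : H) : ℝ :=
  ∑' k, lam k ^ l * ⟪u, φ k⟫ * ⟪v, φ k⟫

/-- The energy bilinear form `a(u,v) = Σ_k λ_k (u,φ_k)(v,φ_k)`. -/
def aForm {H : Type*} [NormedAddCommGroup H] [InnerProductSpace ℝ H]
    (φ : ℕ → H) (lam : ℕ → ℝ) (u v : H) : ℝ :=
  aPow φ lam 1 u v

/-- The operator `A`, determined by `A φ_k = λ_k φ_k`. -/
def Aop {H : Type*} [NormedAddCommGroup H] [InnerProductSpace ℝ H]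
    (φ : ℕ → H) (lam : ℕ → ℝ) (v : H) : H :=
  ∑' k, (lam k * ⟪v, φ k⟫) • φ k

/-- Value at time `s` of the polynomial of degree ≤ q (with coefficients `c n ·`)
attached to the `n`-th time subinterval. -/
def pval {H : Type*} [NormedAddCommGroup H] [InnerProductSpace ℝ H]
    (q : ℕ) (c : ℕ → ℕ → H) (n : ℕ) (s : ℝ) : H :=
  ∑ j ∈ Finset.range (q + 1), s ^ j • c n j

/-- Time derivative of `pval`. -/
def pderiv {H : Type*} [NormedAddCommGroup H] [InnerProductSpace ℝ H]
    (q : ℕ) (c : ℕ → ℕ → H) (n : ℕ) (s : ℝ) : H :=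
  ∑ j ∈ Finset.range (q + 1), ((j : ℝ) * s ^ (j - 1)) • c n j

/-- The dG bilinear form `B((u₁,u₂),(v₁,v₂))`, where the piecewise polynomials
`u₁, u₂, v₁, v₂` are described by their coefficient families `c1, c2, d1, d2`
(on the mesh `0 = tt 0 < tt 1 < ⋯ < tt N`). -/
def Bform {H : Type*} [NormedAddCommGroup H] [InnerProductSpace ℝ H]
    (φ : ℕ → H) (lam : ℕ → ℝ) (tt : ℕ → ℝ) (N q : ℕ)
    (c1 c2 d1 d2 : ℕ → ℕ → H) : ℝ :=
  (∑ n ∈ Finset.Icc 1 N, ∫ s in tt (n-1)..tt n,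
      (aForm φ lam (pderiv q c1 n s) (pval q d1 n s)
        - aForm φ lam (pval q c2 n s) (pval q d1 n s)
        + ⟪pderiv q c2 n s, pval q d2 n s⟫
        + aForm φ lam (pval q c1 n s) (pval q d2 n s)))
  + (∑ n ∈ Finset.Icc 1 (N-1),
      (aForm φ lam (pval q c1 (n+1) (tt n) - pval q c1 n (tt n)) (pval q d1 (n+1) (tt n))
        + ⟪pval q c2 (n+1) (tt n) - pval q c2 n (tt n), pval q d2 (n+1) (tt n)⟫))
  + aForm φ lam (pval q c1 1 (tt 0)) (pval q d1 1 (tt 0))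
  + ⟪pval q c2 1 (tt 0), pval q d2 1 (tt 0)⟫

/-- Supremum of `g` over the open interval `(a,b)`. -/
def supIoo (g : ℝ → ℝ) (a b : ℝ) : ℝ :=
  sSup (g '' Set.Ioo a b)

/-- Squared discrete fractional norm `‖v‖_{h,s}² = ‖A_h^{s/2} v‖²`, expressed through
an orthonormal eigenbasis `e` of `A_h` on `S_h` with eigenvalues `μ`. -/
def hNormSqh {H : Type*} [NormedAddCommGroup H] [InnerProductSpace ℝ H]
    {m : ℕ} (e : Fin m → H) (μ : Fin m → ℝ) (s : ℝ) (v : H) : ℝ :=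
  ∑ i, μ i ^ s * ⟪v, e i⟫ ^ 2

/-- Discrete fractional norm `‖v‖_{h,s}`. -/
def hNormh {H : Type*} [NormedAddCommGroup H] [InnerProductSpace ℝ H]
    {m : ℕ} (e : Fin m → H) (μ : Fin m → ℝ) (s : ℝ) (v : H) : ℝ :=
  Real.sqrt (hNormSqh e μ s v)

/-- Discrete weighted pairing: `aPowh e μ (l+1) u v = a(u, A_h^l v)` and
`aPowh e μ l u v = (u, A_h^l v)` for `u, v ∈ S_h`. -/
def aPowh {H : Type*} [NormedAddCommGroup H] [InnerProductSpace ℝ H]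
    {m : ℕ} (e : Fin m → H) (μ : Fin m → ℝ) (l : ℝ) (u v : H) : ℝ :=
  ∑ i, μ i ^ l * ⟪u, e i⟫ * ⟪v, e i⟫

/-!
Test the dG equations with `V = (A_h^l U₁, A_h^l U₂)`. On each time interval the coupling terms
`-a(U₂, A_h^l U₁)` and `a(U₁, A_h^l U₂)` cancel, and what remains is the time derivative of half
the discrete energy `‖U₁‖²_{h,l+1} + ‖U₂‖²_{h,l}`. Each jump term `a([U₁], A_h^l U₁⁺)` equals
`(‖[U₁]‖² + ‖U₁⁺‖² - ‖U₁⁻‖²) / 2` (same for `U₂`), so the energies telescope. On the data side,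
`a(f₁, ·)` and `(f₂, ·)` agree on `S_h` with `a(R_h f₁, ·)` and `(P_h f₂, ·)`, and since the test
functions are polynomials of degree `≤ q` in time, `R_h f₁` and `P_h f₂` may then be replaced by
their `L₂`-projections `P_k R_h f₁` and `P_k P_h f₂`.
-/
theorem summable_and_abs_tsum_mul_le {w a b : ℕ → ℝ} (hw : ∀ k, 0 ≤ w k)
    (ha : Summable fun k => w k * a k ^ 2) (hb : Summable fun k => w k * b k ^ 2) :
    Summable (fun k => w k * a k * b k) ∧
      |∑' k, w k * a k * b k| ≤ √(∑' k, w k * a k ^ 2) * √(∑' k, w k * b k ^ 2) := by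
  have hsq : ∀ c : ℕ → ℝ, ∀ k, (√(w k) * |c k|) ^ (2 : ℝ) = w k * c k ^ 2 := fun c k => by
    rw [Real.rpow_two, mul_pow, Real.sq_sqrt (hw k), sq_abs]
  have hprod : ∀ k, √(w k) * |a k| * (√(w k) * |b k|) = |w k * a k * b k| := fun k => by
    rw [abs_mul, abs_mul, abs_of_nonneg (hw k)]
    linear_combination (|a k| * |b k|) * Real.mul_self_sqrt (hw k)
  obtain ⟨hs, hle⟩ := Real.summable_and_inner_le_Lp_mul_Lq_tsum_of_nonneg
    Real.HolderConjugate.two_two (f := fun k => √(w k) * |a k|) (g := fun k => √(w k) * |b k|)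
    (fun k => by positivity) (fun k => by positivity) (by simpa only [hsq] using ha)
    (by simpa only [hsq] using hb)
  simp only [hsq, hprod, ← Real.sqrt_eq_rpow] at hs hle
  have habs := norm_tsum_le_tsum_norm (f := fun k => w k * a k * b k) hs
  exact ⟨hs.of_abs, habs.trans hle⟩

theorem IntervalIntegrable.inner_const {H : Type*} [NormedAddCommGroup H] [InnerProductSpace ℝ H]
    {f : ℝ → H} {μ : Measure ℝ} {a b : ℝ} (hf : IntervalIntegrable f μ a b) (w : H) :
    IntervalIntegrable (fun t => ⟪f t, w⟫) μ a b :=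
  ⟨hf.1.inner_const w, hf.2.inner_const w⟩

section EnergyForm

variable {H : Type*} [NormedAddCommGroup H] [InnerProductSpace ℝ H] {φ : ℕ → H} {lam : ℕ → ℝ}

theorem aForm_eq_tsum (u v : H) : aForm φ lam u v = ∑' k, lam k * ⟪u, φ k⟫ * ⟪v, φ k⟫ := by
  simp only [aForm, aPow, Real.rpow_one]

theorem memHs_one_iff {v : H} : MemHs φ lam 1 v ↔ Summable fun k => lam k * ⟪v, φ k⟫ ^ 2 := by
  simp only [MemHs, Real.rpow_one]

theorem hsNorm_one_eq (v : H) : hsNorm φ lam 1 v = √(∑' k, lam k * ⟪v, φ k⟫ ^ 2) := by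
  simp only [hsNorm, hsNormSq, Real.rpow_one]

theorem aForm_comm (u v : H) : aForm φ lam u v = aForm φ lam v u := by
  simp only [aForm_eq_tsum, mul_right_comm]

theorem summable_aForm (hlam : ∀ k, 0 ≤ lam k) {u v : H} (hu : MemHs φ lam 1 u)
    (hv : MemHs φ lam 1 v) : Summable fun k => lam k * ⟪u, φ k⟫ * ⟪v, φ k⟫ :=
  (summable_and_abs_tsum_mul_le hlam (memHs_one_iff.1 hu) (memHs_one_iff.1 hv)).1

theorem abs_aForm_le (hlam : ∀ k, 0 ≤ lam k) {u v : H} (hu : MemHs φ lam 1 u)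
    (hv : MemHs φ lam 1 v) : |aForm φ lam u v| ≤ hsNorm φ lam 1 u * hsNorm φ lam 1 v := by
  rw [aForm_eq_tsum, hsNorm_one_eq, hsNorm_one_eq]
  exact (summable_and_abs_tsum_mul_le hlam (memHs_one_iff.1 hu) (memHs_one_iff.1 hv)).2

theorem aForm_sub_left (hlam : ∀ k, 0 ≤ lam k) {u u' v : H} (hu : MemHs φ lam 1 u)
    (hu' : MemHs φ lam 1 u') (hv : MemHs φ lam 1 v) :
    aForm φ lam (u - u') v = aForm φ lam u v - aForm φ lam u' v := by
  simp only [aForm_eq_tsum, ← (summable_aForm hlam hu hv).tsum_sub (summable_aForm hlam hu' hv),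
    inner_sub_left, mul_sub, sub_mul]

theorem aForm_sum_smul_left (hlam : ∀ k, 0 ≤ lam k) {ι : Type*} (s : Finset ι) (c : ι → ℝ)
    {u : ι → H} (hu : ∀ i ∈ s, MemHs φ lam 1 (u i)) {v : H} (hv : MemHs φ lam 1 v) :
    aForm φ lam (∑ i ∈ s, c i • u i) v = ∑ i ∈ s, c i * aForm φ lam (u i) v := by
  simp only [aForm_eq_tsum, sum_inner, real_inner_smul_left, Finset.mul_sum, Finset.sum_mul,
    ← tsum_mul_left]
  rw [← Summable.tsum_finsetSum fun i hi => ((summable_aForm hlam (hu i hi) hv).mul_left (c i))]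
  exact tsum_congr fun k => Finset.sum_congr rfl fun i _ => by ring

theorem intervalIntegrable_aForm_left (hlam : ∀ k, 0 ≤ lam k) {f : ℝ → H}
    (hmeas : AEStronglyMeasurable f volume) (hmem : ∀ t, MemHs φ lam 1 (f t)) {w : H}
    (hw : MemHs φ lam 1 w) {a b : ℝ}
    (hint : IntervalIntegrable (fun t => hsNorm φ lam 1 (f t)) volume a b) :
    IntervalIntegrable (fun t => aForm φ lam (f t) w) volume a b := by
  have hmeas' : AEStronglyMeasurable (fun t => aForm φ lam (f t) w) volume :=
    aestronglyMeasurable_of_tendsto_ae Filter.atTop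
      (f := fun K t => ∑ k ∈ Finset.range K, lam k * ⟪f t, φ k⟫ * ⟪w, φ k⟫)
      (fun K => Finset.aestronglyMeasurable_fun_sum _ fun k _ =>
        ((hmeas.inner_const).const_mul (lam k)).mul_const _)
      (ae_of_all _ fun t => by
        rw [aForm_eq_tsum]; exact (summable_aForm hlam (hmem t) hw).hasSum.tendsto_sum_nat)
  refine (hint.mul_const (hsNorm φ lam 1 w)).mono_fun hmeas'.restrict (ae_of_all _ fun t => ?_)
  simp only [Real.norm_eq_abs]
  exact (abs_aForm_le hlam (hmem t) hw).trans (le_abs_self _)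

end EnergyForm

section TimePolynomials

variable {H : Type*} [NormedAddCommGroup H] [InnerProductSpace ℝ H] (q : ℕ) (c : ℕ → ℕ → H)
  (n : ℕ)

theorem pval_mem {S : Submodule ℝ H} (hc : ∀ n j, c n j ∈ S) (s : ℝ) : pval q c n s ∈ S :=
  Submodule.sum_mem _ fun j _ => Submodule.smul_mem _ _ (hc n j)

theorem pderiv_mem {S : Submodule ℝ H} (hc : ∀ n j, c n j ∈ S) (s : ℝ) : pderiv q c n s ∈ S :=
  Submodule.sum_mem _ fun j _ => Submodule.smul_mem _ _ (hc n j)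

theorem map_pval {H' F : Type*} [NormedAddCommGroup H'] [InnerProductSpace ℝ H']
    [FunLike F H H'] [LinearMapClass F ℝ H H'] (L : F) (s : ℝ) :
    pval q (fun n j => L (c n j)) n s = L (pval q c n s) := by
  simp only [pval, map_sum, map_smul]

theorem inner_pval_left (s : ℝ) (w : H) :
    ⟪pval q c n s, w⟫ = ∑ j ∈ Finset.range (q + 1), ⟪c n j, w⟫ * s ^ j := by
  simp only [pval, sum_inner, real_inner_smul_left, mul_comm]

theorem continuous_pval : Continuous (pval q c n) :=
  continuous_finsetSum _ fun j _ => (continuous_pow j).smul continuous_const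

theorem continuous_pderiv : Continuous (pderiv q c n) :=
  continuous_finsetSum _ fun j _ =>
    (continuous_const.mul (continuous_pow (j - 1))).smul continuous_const

theorem hasDerivAt_pval (s : ℝ) : HasDerivAt (pval q c n) (pderiv q c n s) s := by
  unfold pval pderiv
  exact HasDerivAt.fun_sum fun j _ => (hasDerivAt_pow j s).smul_const (c n j)

end TimePolynomials

section DiscreteSpectralCalculus

variable {H : Type*} [NormedAddCommGroup H] [InnerProductSpace ℝ H] {m : ℕ} (e : Fin m → H)
  (μ : Fin m → ℝ)

/-- The power `A_h ^ l`, through the eigenbasis `e` of `A_h` with eigenvalues `μ`. -/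
def AhPow (l : ℝ) : H →L[ℝ] H :=
  ∑ i, (μ i ^ l) • (innerSL ℝ (e i)).smulRight (e i)

theorem AhPow_apply (l : ℝ) (v : H) : AhPow e μ l v = ∑ i, (μ i ^ l * ⟪v, e i⟫) • e i := by
  simp [AhPow, smul_smul, real_inner_comm]

theorem AhPow_mem {S : Submodule ℝ H} (he : ∀ i, e i ∈ S) (l : ℝ) (v : H) :
    AhPow e μ l v ∈ S := by
  rw [AhPow_apply]
  exact Submodule.sum_mem _ fun i _ => Submodule.smul_mem _ _ (he i)

theorem inner_AhPow_right (l : ℝ) (u v : H) : ⟪u, AhPow e μ l v⟫ = aPowh e μ l u v := by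
  simp only [AhPow_apply, inner_sum, real_inner_smul_right, aPowh]
  exact Finset.sum_congr rfl fun i _ => by ring

theorem inner_AhPow_left_basis {e : Fin m → H} (he : Orthonormal ℝ e) (l : ℝ) (v : H)
    (i : Fin m) : ⟪AhPow e μ l v, e i⟫ = μ i ^ l * ⟪v, e i⟫ := by
  rw [AhPow_apply, he.inner_left_fintype]
  rfl

theorem aPowh_comm (L : ℝ) (u v : H) : aPowh e μ L u v = aPowh e μ L v u :=
  Finset.sum_congr rfl fun i _ => by ring

theorem aPowh_self (L : ℝ) (v : H) : aPowh e μ L v v = hNormSqh e μ L v :=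
  Finset.sum_congr rfl fun i _ => by ring

theorem two_mul_aPowh_sub_self (L : ℝ) (u v : H) :
    2 * aPowh e μ L (u - v) u = hNormSqh e μ L (u - v) + hNormSqh e μ L u - hNormSqh e μ L v := by
  simp only [hNormSqh, aPowh, inner_sub_left, Finset.mul_sum, ← Finset.sum_sub_distrib,
    ← Finset.sum_add_distrib]
  exact Finset.sum_congr rfl fun i _ => by ring

theorem hNormSqh_sub (L : ℝ) (u w : H) :
    hNormSqh e μ L (u - w) = hNormSqh e μ L u - 2 * aPowh e μ L w u + hNormSqh e μ L w := by
  simp only [hNormSqh, aPowh, inner_sub_left, Finset.mul_sum, ← Finset.sum_sub_distrib,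
    ← Finset.sum_add_distrib]
  exact Finset.sum_congr rfl fun i _ => by ring

theorem hasDerivAt_hNormSqh (L : ℝ) {u : ℝ → H} {u' : H} {t : ℝ} (hu : HasDerivAt u u' t) :
    HasDerivAt (fun t => hNormSqh e μ L (u t)) (2 * aPowh e μ L u' (u t)) t := by
  have hcoord : ∀ i, HasDerivAt (fun t => ⟪u t, e i⟫) ⟪u', e i⟫ t := fun i => by
    simpa using HasDerivAt.inner ℝ hu (hasDerivAt_const t (e i))
  simp only [hNormSqh, aPowh, Finset.mul_sum]
  exact HasDerivAt.fun_sum fun i _ =>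
    (((hcoord i).fun_pow 2).const_mul (μ i ^ L)).congr_deriv (by push_cast; ring)

theorem integral_aPowh_deriv_self (L : ℝ) {u u' : ℝ → H} (hu : ∀ t, HasDerivAt u (u' t) t)
    (hu' : Continuous u') (a b : ℝ) :
    ∫ t in a..b, aPowh e μ L (u' t) (u t) = (hNormSqh e μ L (u b) - hNormSqh e μ L (u a)) / 2 := by
  have hcont : Continuous fun t => aPowh e μ L (u' t) (u t) :=
    continuous_finsetSum _ fun i _ => (continuous_const.mul (hu'.inner continuous_const)).mul
      ((continuous_iff_continuousAt.2 fun t => (hu t).continuousAt).inner continuous_const)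
  have hderiv : ∀ t ∈ Set.uIcc a b, HasDerivAt (fun t => hNormSqh e μ L (u t) / 2)
      (aPowh e μ L (u' t) (u t)) t := fun t _ => by
    simpa using (hasDerivAt_hNormSqh e μ L (hu t)).div_const 2
  rw [intervalIntegral.integral_eq_sub_of_hasDerivAt hderiv (hcont.intervalIntegrable a b)]
  ring

end DiscreteSpectralCalculus

section DiscreteOperator

variable {H : Type*} [NormedAddCommGroup H] [InnerProductSpace ℝ H] {φ : ℕ → H} {lam : ℕ → ℝ}
  {S : Submodule ℝ H} {m : ℕ} {e : Fin m → H} {μ : Fin m → ℝ}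

/-- `e` is an orthonormal basis of `S` made of eigenvectors, with eigenvalues `μ`, of the operator
`A_h` on `S` defined by `(A_h v, w) = a(v, w)`. -/
structure IsEigenbasisAh (φ : ℕ → H) (lam : ℕ → ℝ) (S : Submodule ℝ H) (e : Fin m → H)
    (μ : Fin m → ℝ) : Prop where
  orthonormal : Orthonormal ℝ e
  mem : ∀ i, e i ∈ S
  repr : ∀ v ∈ S, v = ∑ i, ⟪v, e i⟫ • e i
  pos : ∀ i, 0 < μ i
  aForm_eq : ∀ i, ∀ w ∈ S, aForm φ lam (e i) w = μ i * ⟪e i, w⟫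

namespace IsEigenbasisAh

theorem aForm_eq_aPowh (hE : IsEigenbasisAh φ lam S e μ) (hlam : ∀ k, 0 ≤ lam k)
    (hSV : ∀ v ∈ S, MemHs φ lam 1 v) {u w : H} (hu : u ∈ S) (hw : w ∈ S) :
    aForm φ lam u w = aPowh e μ 1 u w := by
  conv_lhs => rw [hE.repr u hu]
  rw [aForm_sum_smul_left hlam _ _ (fun i _ => hSV _ (hE.mem i)) (hSV w hw)]
  simp only [aPowh, hE.aForm_eq _ w hw, Real.rpow_one, real_inner_comm (e _) w]
  exact Finset.sum_congr rfl fun i _ => by ring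

theorem aForm_AhPow (hE : IsEigenbasisAh φ lam S e μ) (hlam : ∀ k, 0 ≤ lam k)
    (hSV : ∀ v ∈ S, MemHs φ lam 1 v) {u : H} (hu : u ∈ S) (l : ℝ) (v : H) :
    aForm φ lam u (AhPow e μ l v) = aPowh e μ (l + 1) u v := by
  rw [hE.aForm_eq_aPowh hlam hSV hu (AhPow_mem e μ hE.mem l v)]
  simp only [aPowh, inner_AhPow_left_basis μ hE.orthonormal, Real.rpow_one]
  exact Finset.sum_congr rfl fun i _ => by rw [Real.rpow_add_one (hE.pos i).ne']; ring

theorem inner_eq_of_aForm_eq (hE : IsEigenbasisAh φ lam S e μ) {v g : H} (hg : g ∈ S)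
    (hgv : ∀ χ ∈ S, aForm φ lam v χ = aForm φ lam g χ) (i : Fin m) :
    ⟪g, e i⟫ = (μ i)⁻¹ * aForm φ lam v (e i) := by
  rw [hgv _ (hE.mem i), aForm_comm, hE.aForm_eq i g hg, real_inner_comm,
    inv_mul_cancel_left₀ (hE.pos i).ne']

theorem intervalIntegrable_of_inner (hE : IsEigenbasisAh φ lam S e μ) {g : ℝ → H} {a b : ℝ}
    (hg : ∀ t, g t ∈ S) (hcoord : ∀ i, IntervalIntegrable (fun t => ⟪g t, e i⟫) volume a b) :
    IntervalIntegrable g volume a b := by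
  have hrepr : g = ∑ i, fun t => ⟪g t, e i⟫ • e i := by
    ext t
    rw [Finset.sum_apply]
    exact hE.repr _ (hg t)
  rw [hrepr]
  exact IntervalIntegrable.sum _ fun i _ => (hcoord i).smul_continuousOn continuousOn_const

end IsEigenbasisAh

end DiscreteOperator

section PolynomialOrthogonality

variable {H : Type*} [NormedAddCommGroup H] [InnerProductSpace ℝ H] {q n : ℕ}
  {P : ℕ → ℕ → H} {g : ℝ → H} {a b : ℝ}

theorem integral_inner_mul_inner_pval_eq [CompleteSpace H] (hg : IntervalIntegrable g volume a b)
    (hP : ∀ j ∈ Finset.range (q + 1), ∫ s in a..b, s ^ j • (pval q P n s - g s) = 0)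
    (c : ℕ → ℕ → H) (w x : H) :
    ∫ s in a..b, ⟪g s, w⟫ * ⟪pval q c n s, x⟫
      = ∫ s in a..b, ⟪pval q P n s, w⟫ * ⟪pval q c n s, x⟫ := by
  have hdiff : IntervalIntegrable (fun s => pval q P n s - g s) volume a b :=
    ((continuous_pval q P n).intervalIntegrable a b).sub hg
  have hvec : ∫ s in a..b, ⟪pval q c n s, x⟫ • (pval q P n s - g s) = 0 := by
    simp only [inner_pval_left, Finset.sum_smul, mul_smul]
    have hterm : ∀ j, IntervalIntegrable
        (fun s => ⟪c n j, x⟫ • s ^ j • (pval q P n s - g s)) volume a b := fun j =>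
      (hdiff.continuousOn_smul (continuous_pow j).continuousOn).smul _
    rw [intervalIntegral.integral_finsetSum fun j _ => hterm j]
    exact Finset.sum_eq_zero fun j hj => by rw [intervalIntegral.integral_smul, hP j hj, smul_zero]
  have hcont : Continuous fun s => ⟪pval q c n s, x⟫ :=
    (continuous_pval q c n).inner continuous_const
  have hint : IntervalIntegrable (fun s => ⟪pval q c n s, x⟫ • (pval q P n s - g s)) volume a b :=
    hdiff.continuousOn_smul hcont.continuousOn
  have hscalar := (innerSL ℝ w).intervalIntegral_comp_comm hint
  rw [hvec, map_zero] at hscalar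
  have hP_int : IntervalIntegrable (fun s => ⟪pval q P n s, w⟫ * ⟪pval q c n s, x⟫) volume a b :=
    (((continuous_pval q P n).inner continuous_const).mul hcont).intervalIntegrable a b
  have hg_int : IntervalIntegrable (fun s => ⟪g s, w⟫ * ⟪pval q c n s, x⟫) volume a b :=
    (hg.inner_const w).mul_continuousOn hcont.continuousOn
  rw [eq_comm, ← sub_eq_zero, ← intervalIntegral.integral_sub hP_int hg_int, ← hscalar]
  refine intervalIntegral.integral_congr fun s _ => ?_
  simp only [innerSL_apply_apply, real_inner_smul_right, inner_sub_right, real_inner_comm w]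
  ring

theorem intervalIntegrable_inner_mul_inner_pval (hg : IntervalIntegrable g volume a b)
    (c : ℕ → ℕ → H) (w x : H) :
    IntervalIntegrable (fun s => ⟪g s, w⟫ * ⟪pval q c n s, x⟫) volume a b :=
  (hg.inner_const w).mul_continuousOn ((continuous_pval q c n).inner continuous_const).continuousOn

theorem intervalIntegrable_aPowh_pval {m : ℕ} (e : Fin m → H) (μ : Fin m → ℝ) (L : ℝ)
    (hg : IntervalIntegrable g volume a b) (c : ℕ → ℕ → H) :
    IntervalIntegrable (fun s => aPowh e μ L (g s) (pval q c n s)) volume a b := by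
  simp only [aPowh, mul_assoc]
  simpa only [Finset.sum_fn] using IntervalIntegrable.sum Finset.univ fun i _ =>
    (intervalIntegrable_inner_mul_inner_pval (q := q) (n := n) hg c (e i) (e i)).const_mul (μ i ^ L)

theorem integral_aPowh_pval_eq [CompleteSpace H] {m : ℕ} (e : Fin m → H) (μ : Fin m → ℝ) (L : ℝ)
    (hg : IntervalIntegrable g volume a b)
    (hP : ∀ j ∈ Finset.range (q + 1), ∫ s in a..b, s ^ j • (pval q P n s - g s) = 0)
    (c : ℕ → ℕ → H) :
    ∫ s in a..b, aPowh e μ L (g s) (pval q c n s)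
      = ∫ s in a..b, aPowh e μ L (pval q P n s) (pval q c n s) := by
  simp only [aPowh, mul_assoc]
  rw [intervalIntegral.integral_finsetSum fun i _ =>
      (intervalIntegrable_inner_mul_inner_pval hg c (e i) (e i)).const_mul _,
    intervalIntegral.integral_finsetSum fun i _ => (intervalIntegrable_inner_mul_inner_pval
      ((continuous_pval q P n).intervalIntegrable a b) c (e i) (e i)).const_mul _]
  simp only [intervalIntegral.integral_const_mul, integral_inner_mul_inner_pval_eq hg hP]

end PolynomialOrthogonality

theorem sum_Icc_sub_add_sum_Icc_sub (f g : ℕ → ℝ) {N : ℕ} (hN : 1 ≤ N) :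
    ∑ n ∈ Finset.Icc 1 N, (f n - g n) + ∑ n ∈ Finset.Icc 1 (N - 1), (g (n + 1) - f n)
      = f N - g 1 := by
  obtain ⟨M, rfl⟩ : ∃ M, N = M + 1 := ⟨N - 1, by omega⟩
  rw [Nat.add_sub_cancel]
  induction M with
  | zero => simp
  | succ M ih =>
    rw [Finset.sum_Icc_succ_top (by omega) fun n => f n - g n,
      Finset.sum_Icc_succ_top (by omega) fun n => g (n + 1) - f n]
    linarith [ih (by omega)]

section DGEnergy

variable {H : Type*} [NormedAddCommGroup H] [InnerProductSpace ℝ H] {φ : ℕ → H} {lam : ℕ → ℝ}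
  {S : Submodule ℝ H} {m : ℕ} {e : Fin m → H} {μ : Fin m → ℝ} {q : ℕ} {c1 c2 : ℕ → ℕ → H}

def discreteEnergy (e : Fin m → H) (μ : Fin m → ℝ) (l : ℝ) (u₁ u₂ : H) : ℝ :=
  hNormSqh e μ (l + 1) u₁ + hNormSqh e μ l u₂

theorem integral_dG_AhPow_self (hE : IsEigenbasisAh φ lam S e μ) (hlam : ∀ k, 0 ≤ lam k)
    (hSV : ∀ v ∈ S, MemHs φ lam 1 v) (hc1S : ∀ n j, c1 n j ∈ S) (hc2S : ∀ n j, c2 n j ∈ S)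
    (l : ℝ) (n : ℕ) (a b : ℝ) :
    ∫ s in a..b,
      (aForm φ lam (pderiv q c1 n s) (pval q (fun n j => AhPow e μ l (c1 n j)) n s)
        - aForm φ lam (pval q c2 n s) (pval q (fun n j => AhPow e μ l (c1 n j)) n s)
        + ⟪pderiv q c2 n s, pval q (fun n j => AhPow e μ l (c2 n j)) n s⟫
        + aForm φ lam (pval q c1 n s) (pval q (fun n j => AhPow e μ l (c2 n j)) n s))
      = (discreteEnergy e μ l (pval q c1 n b) (pval q c2 n b)
          - discreteEnergy e μ l (pval q c1 n a) (pval q c2 n a)) / 2 := by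
  have hpt : ∀ s,
      aForm φ lam (pderiv q c1 n s) (pval q (fun n j => AhPow e μ l (c1 n j)) n s)
        - aForm φ lam (pval q c2 n s) (pval q (fun n j => AhPow e μ l (c1 n j)) n s)
        + ⟪pderiv q c2 n s, pval q (fun n j => AhPow e μ l (c2 n j)) n s⟫
        + aForm φ lam (pval q c1 n s) (pval q (fun n j => AhPow e μ l (c2 n j)) n s)
      = aPowh e μ (l + 1) (pderiv q c1 n s) (pval q c1 n s)
        + aPowh e μ l (pderiv q c2 n s) (pval q c2 n s) := fun s => by
    simp only [map_pval, hE.aForm_AhPow hlam hSV (pderiv_mem q c1 n hc1S s),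
      hE.aForm_AhPow hlam hSV (pval_mem q c1 n hc1S s),
      hE.aForm_AhPow hlam hSV (pval_mem q c2 n hc2S s), inner_AhPow_right,
      aPowh_comm e μ (l + 1) (pval q c2 n s)]
    ring
  have hcont : ∀ (L : ℝ) (c : ℕ → ℕ → H),
      Continuous fun s => aPowh e μ L (pderiv q c n s) (pval q c n s) := fun L c =>
    continuous_finsetSum _ fun i _ =>
      (continuous_const.mul ((continuous_pderiv q c n).inner continuous_const)).mul
        ((continuous_pval q c n).inner continuous_const)
  rw [intervalIntegral.integral_congr fun s _ => hpt s,
    intervalIntegral.integral_add ((hcont _ c1).intervalIntegrable a b)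
      ((hcont _ c2).intervalIntegrable a b)]
  simp only [integral_aPowh_deriv_self e μ _ (hasDerivAt_pval q _ n) (continuous_pderiv q _ n),
    discreteEnergy]
  ring

theorem two_mul_Bform_AhPow_self (hE : IsEigenbasisAh φ lam S e μ) (hlam : ∀ k, 0 ≤ lam k)
    (hSV : ∀ v ∈ S, MemHs φ lam 1 v) (hc1S : ∀ n j, c1 n j ∈ S) (hc2S : ∀ n j, c2 n j ∈ S)
    (l : ℝ) (tt : ℕ → ℝ) {N : ℕ} (hN : 1 ≤ N) :
    2 * Bform φ lam tt N q c1 c2 (fun n j => AhPow e μ l (c1 n j))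
        (fun n j => AhPow e μ l (c2 n j))
      = discreteEnergy e μ l (pval q c1 N (tt N)) (pval q c2 N (tt N))
        + discreteEnergy e μ l (pval q c1 1 (tt 0)) (pval q c2 1 (tt 0))
        + ∑ n ∈ Finset.Icc 1 (N - 1), discreteEnergy e μ l
            (pval q c1 (n + 1) (tt n) - pval q c1 n (tt n))
            (pval q c2 (n + 1) (tt n) - pval q c2 n (tt n)) := by
  set E : ℕ → ℝ → ℝ := fun n t => discreteEnergy e μ l (pval q c1 n t) (pval q c2 n t)
  have hjump : ∀ n,
      aForm φ lam (pval q c1 (n + 1) (tt n) - pval q c1 n (tt n))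
            (pval q (fun n j => AhPow e μ l (c1 n j)) (n + 1) (tt n))
        + ⟪pval q c2 (n + 1) (tt n) - pval q c2 n (tt n),
            pval q (fun n j => AhPow e μ l (c2 n j)) (n + 1) (tt n)⟫
      = (discreteEnergy e μ l (pval q c1 (n + 1) (tt n) - pval q c1 n (tt n))
            (pval q c2 (n + 1) (tt n) - pval q c2 n (tt n))
          + (E (n + 1) (tt n) - E n (tt n))) / 2 := fun n => by
    simp only [map_pval, inner_AhPow_right, E, discreteEnergy,
      hE.aForm_AhPow hlam hSV (sub_mem (pval_mem q c1 _ hc1S _) (pval_mem q c1 _ hc1S _))]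
    linarith [two_mul_aPowh_sub_self e μ (l + 1) (pval q c1 (n + 1) (tt n)) (pval q c1 n (tt n)),
      two_mul_aPowh_sub_self e μ l (pval q c2 (n + 1) (tt n)) (pval q c2 n (tt n))]
  have hinit : aForm φ lam (pval q c1 1 (tt 0)) (pval q (fun n j => AhPow e μ l (c1 n j)) 1 (tt 0))
      + ⟪pval q c2 1 (tt 0), pval q (fun n j => AhPow e μ l (c2 n j)) 1 (tt 0)⟫ = E 1 (tt 0) := by
    simp only [map_pval, E, discreteEnergy, inner_AhPow_right, aPowh_self,
      hE.aForm_AhPow hlam hSV (pval_mem q c1 _ hc1S _)]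
  have htel := sum_Icc_sub_add_sum_Icc_sub (fun n => E n (tt n)) (fun n => E n (tt (n - 1))) hN
  simp only [Nat.add_sub_cancel, Nat.sub_self] at htel
  unfold Bform
  rw [Finset.sum_congr rfl fun n _ => integral_dG_AhPow_self hE hlam hSV hc1S hc2S l n _ _,
    Finset.sum_congr rfl fun n _ => hjump n, add_assoc _ (aForm _ _ _ _), hinit,
    ← Finset.sum_div, ← Finset.sum_div, Finset.sum_add_distrib]
  linarith

end DGEnergy

theorem uIcc_subset_uIcc_of_mesh {tt : ℕ → ℝ} {N : ℕ} (hmesh : ∀ n < N, tt n ≤ tt (n + 1)) {n : ℕ}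
    (hn : n ≤ N) : Set.uIcc (tt (n - 1)) (tt n) ⊆ Set.uIcc (tt 0) (tt N) := by
  have hmono : MonotoneOn tt (Set.Iic N) :=
    monotoneOn_of_le_succ Set.ordConnected_Iic fun k _ _ hk =>
      hmesh k ((Order.lt_succ k).trans_le hk)
  have hmem : ∀ k ≤ N, tt k ∈ Set.uIcc (tt 0) (tt N) := fun k hk =>
    Set.mem_uIcc_of_le (hmono (Nat.zero_le N) hk (Nat.zero_le k))
      (hmono hk (Set.mem_Iic.2 le_rfl) hk)
  exact Set.uIcc_subset_uIcc (hmem _ (by omega)) (hmem _ hn)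

section DataTerms

variable {H : Type*} [NormedAddCommGroup H] [InnerProductSpace ℝ H] {φ : ℕ → H} {lam : ℕ → ℝ}
  {S : Submodule ℝ H} {m : ℕ} {e : Fin m → H} {μ : Fin m → ℝ}

theorem IsEigenbasisAh.intervalIntegrable_of_aForm_eq (hE : IsEigenbasisAh φ lam S e μ)
    (hlam : ∀ k, 0 ≤ lam k) (hSV : ∀ v ∈ S, MemHs φ lam 1 v) {f g : ℝ → H} {a b : ℝ}
    (hgS : ∀ t, g t ∈ S) (hfg : ∀ t, ∀ χ ∈ S, aForm φ lam (f t) χ = aForm φ lam (g t) χ)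
    (hmeas : AEStronglyMeasurable f volume) (hmem : ∀ t, MemHs φ lam 1 (f t))
    (hint : IntervalIntegrable (fun t => hsNorm φ lam 1 (f t)) volume a b) :
    IntervalIntegrable g volume a b := by
  refine hE.intervalIntegrable_of_inner hgS fun i => ?_
  have hcoord : (fun t => ⟪g t, e i⟫) = fun t => (μ i)⁻¹ * aForm φ lam (f t) (e i) :=
    funext fun t => hE.inner_eq_of_aForm_eq (hgS t) (hfg t) i
  rw [hcoord]
  exact (intervalIntegrable_aForm_left hlam hmeas hmem (hSV _ (hE.mem i)) hint).const_mul _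

theorem IsEigenbasisAh.intervalIntegrable_of_inner_eq (hE : IsEigenbasisAh φ lam S e μ)
    {f g : ℝ → H} {a b : ℝ} (hgS : ∀ t, g t ∈ S) (hfg : ∀ t, ∀ χ ∈ S, ⟪f t, χ⟫ = ⟪g t, χ⟫)
    (hint : IntervalIntegrable f volume a b) : IntervalIntegrable g volume a b := by
  refine hE.intervalIntegrable_of_inner hgS fun i => ?_
  have hcoord : (fun t => ⟪g t, e i⟫) = fun t => ⟪f t, e i⟫ :=
    funext fun t => (hfg t _ (hE.mem i)).symm
  rw [hcoord]
  exact hint.inner_const (e i)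

theorem integral_data_AhPow_eq [CompleteSpace H] (hE : IsEigenbasisAh φ lam S e μ)
    (hlam : ∀ k, 0 ≤ lam k) (hSV : ∀ v ∈ S, MemHs φ lam 1 v) {q : ℕ} (c1 c2 : ℕ → ℕ → H)
    (l : ℝ) {n : ℕ} {a b : ℝ} {f1 f2 g1 g2 : ℝ → H} {P1 P2 : ℕ → ℕ → H} (hg1S : ∀ s, g1 s ∈ S)
    (hg1 : ∀ s, ∀ χ ∈ S, aForm φ lam (f1 s) χ = aForm φ lam (g1 s) χ)
    (hg2 : ∀ s, ∀ χ ∈ S, ⟪f2 s, χ⟫ = ⟪g2 s, χ⟫)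
    (hg1int : IntervalIntegrable g1 volume a b) (hg2int : IntervalIntegrable g2 volume a b)
    (hP1 : ∀ j ∈ Finset.range (q + 1), ∫ s in a..b, s ^ j • (pval q P1 n s - g1 s) = 0)
    (hP2 : ∀ j ∈ Finset.range (q + 1), ∫ s in a..b, s ^ j • (pval q P2 n s - g2 s) = 0) :
    ∫ s in a..b, (aForm φ lam (f1 s) (pval q (fun n j => AhPow e μ l (c1 n j)) n s)
        + ⟪f2 s, pval q (fun n j => AhPow e μ l (c2 n j)) n s⟫)
      = ∫ s in a..b, (aPowh e μ (l + 1) (pval q P1 n s) (pval q c1 n s)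
        + aPowh e μ l (pval q P2 n s) (pval q c2 n s)) := by
  have hpt : ∀ s, aForm φ lam (f1 s) (pval q (fun n j => AhPow e μ l (c1 n j)) n s)
        + ⟪f2 s, pval q (fun n j => AhPow e μ l (c2 n j)) n s⟫
      = aPowh e μ (l + 1) (g1 s) (pval q c1 n s) + aPowh e μ l (g2 s) (pval q c2 n s) :=
    fun s => by
      rw [map_pval, map_pval, hg1 s _ (AhPow_mem e μ hE.mem _ _), hE.aForm_AhPow hlam hSV (hg1S s),
        hg2 s _ (AhPow_mem e μ hE.mem _ _), inner_AhPow_right]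
  have hcont : ∀ (P : ℕ → ℕ → H), IntervalIntegrable (pval q P n) volume a b := fun P =>
    (continuous_pval q P n).intervalIntegrable a b
  rw [intervalIntegral.integral_congr fun s _ => hpt s,
    intervalIntegral.integral_add (intervalIntegrable_aPowh_pval e μ _ hg1int c1)
      (intervalIntegrable_aPowh_pval e μ _ hg2int c2),
    intervalIntegral.integral_add (intervalIntegrable_aPowh_pval e μ _ (hcont P1) c1)
      (intervalIntegrable_aPowh_pval e μ _ (hcont P2) c2),
    integral_aPowh_pval_eq e μ _ hg1int hP1, integral_aPowh_pval_eq e μ _ hg2int hP2]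

end DataTerms

theorem dGcG_energy_identity_general
    {H : Type*} [NormedAddCommGroup H] [InnerProductSpace ℝ H] [CompleteSpace H]
    (φ : ℕ → H) (lam : ℕ → ℝ)
    (hlam_pos : ∀ k, 0 < lam k)
    (q : ℕ) (l : ℝ)
    -- the temporal mesh 0 = t₀ < t₁ < ⋯ < t_N = T
    (T : ℝ) (N : ℕ) (hN : 1 ≤ N)
    (tt : ℕ → ℝ) (ht0 : tt 0 = 0) (htN : tt N = T)
    (htmono : ∀ n < N, tt n < tt (n + 1))
    -- the finite element space S_h ⊂ V
    (S : Submodule ℝ H)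
    (hSV : ∀ v ∈ S, MemHs φ lam 1 v)
    -- orthonormal eigenbasis of A_h on S_h: (A_h eᵢ, w) = a(eᵢ,w) = μᵢ (eᵢ,w)
    (m : ℕ) (e : Fin m → H) (μ : Fin m → ℝ)
    (he_on : Orthonormal ℝ e) (he_mem : ∀ i, e i ∈ S)
    (he_span : ∀ v ∈ S, v = ∑ i, ⟪v, e i⟫ • e i)
    (hμ_pos : ∀ i, 0 < μ i)
    (heig : ∀ i, ∀ w ∈ S, aForm φ lam (e i) w = μ i * ⟪e i, w⟫)
    -- Ritz projection R_h and L₂-projection P_h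
    (Rh Ph : H → H)
    (hRh_mem : ∀ v, Rh v ∈ S)
    (hRh : ∀ v, MemHs φ lam 1 v → ∀ χ ∈ S, aForm φ lam (Rh v - v) χ = 0)
    (hPh_mem : ∀ v, Ph v ∈ S)
    (hPh : ∀ v, ∀ χ ∈ S, ⟪Ph v - v, χ⟫ = 0)
    -- the data
    (f1 f2 : ℝ → H) (uh0 vh0 : H) (huh0 : uh0 ∈ S)
    (hf1meas : AEStronglyMeasurable f1 volume)
    (hf1mem : ∀ t, MemHs φ lam 1 (f1 t))
    (hf1int : IntervalIntegrable (fun t => hsNorm φ lam 1 (f1 t)) volume 0 T)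
    (hf2int : IntervalIntegrable f2 volume 0 T)
    -- U = (U₁,U₂) ∈ 𝒱_{h,q}
    (c1 c2 : ℕ → ℕ → H)
    (hc1S : ∀ n j, c1 n j ∈ S) (hc2S : ∀ n j, c2 n j ∈ S)
    -- B(U,V) = L̂(V) for every V = (V₁,V₂) ∈ 𝒱_{h,q}
    (hU : ∀ d1 d2 : ℕ → ℕ → H, (∀ n j, d1 n j ∈ S) → (∀ n j, d2 n j ∈ S) →
      Bform φ lam tt N q c1 c2 d1 d2 =
        (∑ n ∈ Finset.Icc 1 N, ∫ s in tt (n-1)..tt n,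
            (aForm φ lam (f1 s) (pval q d1 n s) + ⟪f2 s, pval q d2 n s⟫))
          + aForm φ lam uh0 (pval q d1 1 (tt 0)) + ⟪vh0, pval q d2 1 (tt 0)⟫)
    -- P_k R_h f₁ and P_k P_h f₂
    (Pk1 Pk2 : ℕ → ℕ → H)
    (hPk1 : ∀ n ∈ Finset.Icc 1 N, ∀ j ∈ Finset.range (q+1),
      (∫ s in tt (n-1)..tt n, (s ^ j) • (pval q Pk1 n s - Rh (f1 s))) = 0)
    (hPk2 : ∀ n ∈ Finset.Icc 1 N, ∀ j ∈ Finset.range (q+1),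
      (∫ s in tt (n-1)..tt n, (s ^ j) • (pval q Pk2 n s - Ph (f2 s))) = 0) :
    hNormSqh e μ (l+1) (pval q c1 N (tt N))
      + hNormSqh e μ l (pval q c2 N (tt N))
      + ((hNormSqh e μ (l+1) (pval q c1 1 (tt 0) - uh0)
            + hNormSqh e μ l (pval q c2 1 (tt 0) - vh0))
          + ∑ n ∈ Finset.Icc 1 (N-1),
              (hNormSqh e μ (l+1) (pval q c1 (n+1) (tt n) - pval q c1 n (tt n))
                + hNormSqh e μ l (pval q c2 (n+1) (tt n) - pval q c2 n (tt n))))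
      = hNormSqh e μ (l+1) uh0 + hNormSqh e μ l vh0
        + 2 * ∑ n ∈ Finset.Icc 1 N, ∫ s in tt (n-1)..tt n,
            (aPowh e μ (l+1) (pval q Pk1 n s) (pval q c1 n s)
              + aPowh e μ l (pval q Pk2 n s) (pval q c2 n s)) := by
  have hlam : ∀ k, 0 ≤ lam k := fun k => (hlam_pos k).le
  have hE : IsEigenbasisAh φ lam S e μ := ⟨he_on, he_mem, he_span, hμ_pos, heig⟩
  have hRitz : ∀ t, ∀ χ ∈ S, aForm φ lam (f1 t) χ = aForm φ lam (Rh (f1 t)) χ := fun t χ hχ =>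
    (sub_eq_zero.1 <| (aForm_sub_left hlam (hSV _ (hRh_mem _)) (hf1mem t) (hSV χ hχ)).symm.trans
      (hRh (f1 t) (hf1mem t) χ hχ)).symm
  have hL2 : ∀ t, ∀ χ ∈ S, ⟪f2 t, χ⟫ = ⟪Ph (f2 t), χ⟫ := fun t χ hχ =>
    (sub_eq_zero.1 <| (inner_sub_left _ _ _).symm.trans (hPh (f2 t) χ hχ)).symm
  have hRint : IntervalIntegrable (fun t => Rh (f1 t)) volume 0 T :=
    hE.intervalIntegrable_of_aForm_eq hlam hSV (fun t => hRh_mem _) hRitz hf1meas hf1mem hf1int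
  have hPint : IntervalIntegrable (fun t => Ph (f2 t)) volume 0 T :=
    hE.intervalIntegrable_of_inner_eq (fun t => hPh_mem _) hL2 hf2int
  have hdata : ∀ n ∈ Finset.Icc 1 N,
      ∫ s in tt (n - 1)..tt n, (aForm φ lam (f1 s) (pval q (fun n j => AhPow e μ l (c1 n j)) n s)
        + ⟪f2 s, pval q (fun n j => AhPow e μ l (c2 n j)) n s⟫)
      = ∫ s in tt (n - 1)..tt n, (aPowh e μ (l + 1) (pval q Pk1 n s) (pval q c1 n s)
        + aPowh e μ l (pval q Pk2 n s) (pval q c2 n s)) := fun n hn => by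
    have hsub := uIcc_subset_uIcc_of_mesh (fun k hk => (htmono k hk).le) (Finset.mem_Icc.1 hn).2
    rw [ht0, htN] at hsub
    exact integral_data_AhPow_eq hE hlam hSV c1 c2 l (fun t => hRh_mem _) hRitz hL2
      (hRint.mono_set hsub) (hPint.mono_set hsub) (hPk1 n hn) (hPk2 n hn)
  have hB := two_mul_Bform_AhPow_self (q := q) hE hlam hSV hc1S hc2S l tt hN
  rw [hU _ _ (fun n j => AhPow_mem e μ he_mem l _) (fun n j => AhPow_mem e μ he_mem l _),
    Finset.sum_congr rfl hdata, map_pval, map_pval, hE.aForm_AhPow hlam hSV huh0,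
    inner_AhPow_right] at hB
  simp only [discreteEnergy] at hB
  linarith [hNormSqh_sub e μ (l + 1) (pval q c1 1 (tt 0)) uh0,
    hNormSqh_sub e μ l (pval q c2 1 (tt 0)) vh0]

/-- **Energy identity for the full discretization dG(q)–cG(r).**
`S` plays the role of `S_h`; `e, μ` is an orthonormal eigenbasis of the discrete
operator `A_h` on `S_h` with (positive) eigenvalues `μ`, through which all the discrete
norms `‖·‖_{h,s} = ‖A_h^{s/2}·‖` and pairings `a(·,A_h^l·)`, `(·,A_h^l·)` are expressed. -/
theorem dGcG_energy_identity
    {H : Type*} [NormedAddCommGroup H] [InnerProductSpace ℝ H] [CompleteSpace H]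
    (φ : ℕ → H) (lam : ℕ → ℝ)
    (hφ : Orthonormal ℝ φ)
    (hφtotal : (Submodule.span ℝ (Set.range φ)).topologicalClosure = ⊤)
    (hlam_pos : ∀ k, 0 < lam k) (hlam_mono : Monotone lam)
    (hlam_top : Filter.Tendsto lam Filter.atTop Filter.atTop)
    (q : ℕ) (l : ℝ)
    -- the temporal mesh 0 = t₀ < t₁ < ⋯ < t_N = T
    (T : ℝ) (hT : 0 < T) (N : ℕ) (hN : 1 ≤ N)
    (tt : ℕ → ℝ) (ht0 : tt 0 = 0) (htN : tt N = T)
    (htmono : ∀ n < N, tt n < tt (n + 1))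
    -- the finite element space S_h ⊂ V
    (S : Submodule ℝ H) (hSfin : FiniteDimensional ℝ S)
    (hSV : ∀ v ∈ S, MemHs φ lam 1 v)
    -- orthonormal eigenbasis of A_h on S_h: (A_h eᵢ, w) = a(eᵢ,w) = μᵢ (eᵢ,w)
    (m : ℕ) (e : Fin m → H) (μ : Fin m → ℝ)
    (he_on : Orthonormal ℝ e) (he_mem : ∀ i, e i ∈ S)
    (he_span : ∀ v ∈ S, v = ∑ i, ⟪v, e i⟫ • e i)
    (hμ_pos : ∀ i, 0 < μ i)
    (heig : ∀ i, ∀ w ∈ S, aForm φ lam (e i) w = μ i * ⟪e i, w⟫)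
    -- Ritz projection R_h and L₂-projection P_h
    (Rh Ph : H → H)
    (hRh_mem : ∀ v, Rh v ∈ S)
    (hRh : ∀ v, MemHs φ lam 1 v → ∀ χ ∈ S, aForm φ lam (Rh v - v) χ = 0)
    (hPh_mem : ∀ v, Ph v ∈ S)
    (hPh : ∀ v, ∀ χ ∈ S, ⟪Ph v - v, χ⟫ = 0)
    -- the data
    (f1 f2 : ℝ → H) (uh0 vh0 : H) (huh0 : uh0 ∈ S) (hvh0 : vh0 ∈ S)
    (hf1meas : AEStronglyMeasurable f1 volume)
    (hf2meas : AEStronglyMeasurable f2 volume)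
    (hf1mem : ∀ t, MemHs φ lam 1 (f1 t))
    (hf1int : IntervalIntegrable (fun t => hsNorm φ lam 1 (f1 t)) volume 0 T)
    (hf2int : IntervalIntegrable f2 volume 0 T)
    -- U = (U₁,U₂) ∈ 𝒱_{h,q}
    (c1 c2 : ℕ → ℕ → H)
    (hc1S : ∀ n j, c1 n j ∈ S) (hc2S : ∀ n j, c2 n j ∈ S)
    -- B(U,V) = L̂(V) for every V = (V₁,V₂) ∈ 𝒱_{h,q}
    (hU : ∀ d1 d2 : ℕ → ℕ → H, (∀ n j, d1 n j ∈ S) → (∀ n j, d2 n j ∈ S) →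
      Bform φ lam tt N q c1 c2 d1 d2 =
        (∑ n ∈ Finset.Icc 1 N, ∫ s in tt (n-1)..tt n,
            (aForm φ lam (f1 s) (pval q d1 n s) + ⟪f2 s, pval q d2 n s⟫))
          + aForm φ lam uh0 (pval q d1 1 (tt 0)) + ⟪vh0, pval q d2 1 (tt 0)⟫)
    -- P_k R_h f₁ and P_k P_h f₂
    (Pk1 Pk2 : ℕ → ℕ → H)
    (hPk1S : ∀ n j, Pk1 n j ∈ S) (hPk2S : ∀ n j, Pk2 n j ∈ S)
    (hPk1 : ∀ n ∈ Finset.Icc 1 N, ∀ j ∈ Finset.range (q+1),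
      (∫ s in tt (n-1)..tt n, (s ^ j) • (pval q Pk1 n s - Rh (f1 s))) = 0)
    (hPk2 : ∀ n ∈ Finset.Icc 1 N, ∀ j ∈ Finset.range (q+1),
      (∫ s in tt (n-1)..tt n, (s ^ j) • (pval q Pk2 n s - Ph (f2 s))) = 0) :
    hNormSqh e μ (l+1) (pval q c1 N (tt N))
      + hNormSqh e μ l (pval q c2 N (tt N))
      + ((hNormSqh e μ (l+1) (pval q c1 1 (tt 0) - uh0)
            + hNormSqh e μ l (pval q c2 1 (tt 0) - vh0))
          + ∑ n ∈ Finset.Icc 1 (N-1),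
              (hNormSqh e μ (l+1) (pval q c1 (n+1) (tt n) - pval q c1 n (tt n))
                + hNormSqh e μ l (pval q c2 (n+1) (tt n) - pval q c2 n (tt n))))
      = hNormSqh e μ (l+1) uh0 + hNormSqh e μ l vh0
        + 2 * ∑ n ∈ Finset.Icc 1 N, ∫ s in tt (n-1)..tt n,
            (aPowh e μ (l+1) (pval q Pk1 n s) (pval q c1 n s)
              + aPowh e μ l (pval q Pk2 n s) (pval q c2 n s)) :=
  dGcG_energy_identity_general φ lam hlam_pos q l T N hN tt ht0 htN htmono S hSV m e μ he_on he_mem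
    he_span hμ_pos heig Rh Ph hRh_mem hRh hPh_mem hPh f1 f2 uh0 vh0 huh0 hf1meas hf1mem hf1int
    hf2int c1 c2 hc1S hc2S hU Pk1 Pk2 hPk1 hPk2
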